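/- arXiv:2002.08236 — 3 statements merged into one kernel-verified Lean document; each statement's English description precedes it below -/
import Mathlib

section
/- Define inductively the set A ⊆ (list over {a₁,…,a_{2k}})^k by: (ε,…,ε) ∈ A, and for each j ∈ [2k] and each (w₁,…,w_k) ∈ A, the tuple (y₁w₁y₂, y₃w₂y₄, …, y_{2k−1}w_ky_{2k}) ∈ A, where y_i = a_i if j ⪯ i and y_i = ε otherwise (⪯ a fixed total preorder on [2k]). Then every (w₁,…,w_k) ∈ A satisfies: w_l = a_{2l−1}^{n_{2l−1}} a_{2l}^{n_{2l}} for some natural numbers n₁,…,n_{2k} with n_i ≤ n_j whenever i ⪯ j. -/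
/-- The set of `k`-tuples of words over `Fin (2k)` derivable from the nonterminal `A`
of the grammar constructed in Theorem 3.1: `(ε,…,ε)` is derivable, and for each
`j ∈ [2k]`, from `(w₁,…,w_k)` one derives `(y₁w₁y₂, …, y_{2k-1}w_ky_{2k})`, where
`y_i = a_i` if `j ⪯ i` and `y_i = ε` otherwise. -/
inductive GenA (k : ℕ) (r : Fin (2 * k) → Fin (2 * k) → Prop) [DecidableRel r] :
    (Fin k → List (Fin (2 * k))) → Prop
  | empty : GenA k r (fun _ => [])
  | step (j : Fin (2 * k)) (w : Fin k → List (Fin (2 * k))) (hw : GenA k r w) :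
      GenA k r (fun l =>
        (if r j ⟨2 * l.1, by have := l.isLt; omega⟩ then
            [(⟨2 * l.1, by have := l.isLt; omega⟩ : Fin (2 * k))] else []) ++ w l ++
        (if r j ⟨2 * l.1 + 1, by have := l.isLt; omega⟩ then
            [(⟨2 * l.1 + 1, by have := l.isLt; omega⟩ : Fin (2 * k))] else []))

private lemma rep_snoc {α} (m : ℕ) (x : α) :
    List.replicate m x ++ [x] = x :: List.replicate m x := by
  rw [← List.replicate_succ', List.replicate_succ]

/-- Soundness: every derivable tuple `(w₁,…,w_k)` has the form
`w_l = a_{2l-1}^{n_{2l-1}} a_{2l}^{n_{2l}}` for an `r`-monotone tuple `n`. -/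
theorem stmt_7 (k : ℕ) (hk : 1 ≤ k) (r : Fin (2 * k) → Fin (2 * k) → Prop)
    [DecidableRel r]
    (hrefl : Reflexive r) (htrans : Transitive r) (htotal : ∀ a b, r a b ∨ r b a)
    (w : Fin k → List (Fin (2 * k))) (hw : GenA k r w) :
    ∃ n : Fin (2 * k) → ℕ,
      (∀ i j, r i j → n i ≤ n j) ∧
      ∀ l : Fin k,
        w l =
          List.replicate (n ⟨2 * l.1, by have := l.isLt; omega⟩)
              (⟨2 * l.1, by have := l.isLt; omega⟩ : Fin (2 * k)) ++
          List.replicate (n ⟨2 * l.1 + 1, by have := l.isLt; omega⟩)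
              (⟨2 * l.1 + 1, by have := l.isLt; omega⟩ : Fin (2 * k)) := by
  induction hw with
  | empty => exact ⟨fun _ => 0, fun _ _ _ => le_refl _, fun l => rfl⟩
  | step j w hw ih =>
    obtain ⟨n, hmono, hrep⟩ := ih
    refine ⟨fun i => n i + (if r j i then 1 else 0), ?_, ?_⟩
    · intro i i' hii'
      have h1 := hmono i i' hii'
      by_cases h : r j i
      · simp [h, htrans h hii', h1]
      · have : (if r j i then 1 else 0) = 0 := by simp [h]
        simp [this]
        omega
    · intro l
      simp only [hrep l]
      set a : Fin (2 * k) := ⟨2 * l.1, by have := l.isLt; omega⟩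
      set b : Fin (2 * k) := ⟨2 * l.1 + 1, by have := l.isLt; omega⟩
      by_cases ha : r j a <;> by_cases hb : r j b <;>
        simp [ha, hb, List.replicate_succ, rep_snoc, List.append_assoc]
end

section
/- With A defined as in the previous statement, for every tuple (n₁,…,n_{2k}) ∈ ℕ^{2k} with n_i ≤ n_j whenever i ⪯ j, the tuple (a₁^{n₁}a₂^{n₂}, a₃^{n₃}a₄^{n₄}, …, a_{2k−1}^{n_{2k−1}}a_{2k}^{n_{2k}}) belongs to A. -/
lemma myExistsBot {α : Type*} [DecidableEq α] (r : α → α → Prop) (hrefl : Reflexive r)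
    (htrans : Transitive r) (htotal : ∀ a b, r a b ∨ r b a) (s : Finset α) :
    s.Nonempty → ∃ j ∈ s, ∀ i ∈ s, r j i := by
  induction s using Finset.induction_on with
  | empty => intro h; simp at h
  | @insert a s ha ih =>
    intro _
    rcases s.eq_empty_or_nonempty with h | h
    · subst h
      exact ⟨a, Finset.mem_insert_self _ _, by
        intro i hi
        rcases Finset.mem_insert.1 hi with rfl | hi
        · exact hrefl i
        · simp at hi⟩
    · obtain ⟨j, hj, hjall⟩ := ih h
      rcases htotal j a with hja | haj
      · refine ⟨j, Finset.mem_insert_of_mem hj, ?_⟩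
        intro i hi
        rcases Finset.mem_insert.1 hi with rfl | hi
        · exact hja
        · exact hjall i hi
      · refine ⟨a, Finset.mem_insert_self _ _, ?_⟩
        intro i hi
        rcases Finset.mem_insert.1 hi with rfl | hi
        · exact hrefl i
        · exact htrans haj (hjall i hi)


lemma repl_left {α : Type*} (x : α) {m : ℕ} (h : 1 ≤ m) :
    [x] ++ List.replicate (m - 1) x = List.replicate m x := by
  obtain ⟨m', rfl⟩ : ∃ m', m = m' + 1 := ⟨m - 1, by omega⟩
  simp [List.replicate_succ]

lemma repl_right {α : Type*} (x : α) {m : ℕ} (h : 1 ≤ m) :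
    List.replicate (m - 1) x ++ [x] = List.replicate m x := by
  obtain ⟨m', rfl⟩ : ∃ m', m = m' + 1 := ⟨m - 1, by omega⟩
  simp [List.replicate_succ']

lemma mainAux (k : ℕ) (hk : 1 ≤ k) (r : Fin (2 * k) → Fin (2 * k) → Prop)
    [DecidableRel r]
    (hrefl : Reflexive r) (htrans : Transitive r) (htotal : ∀ a b, r a b ∨ r b a)
    (N : ℕ) :
    ∀ (n : Fin (2 * k) → ℕ), (∑ i, n i) = N → (∀ i j, r i j → n i ≤ n j) →
    GenA k r (fun l =>
      List.replicate (n ⟨2 * l.1, by have := l.isLt; omega⟩)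
          (⟨2 * l.1, by have := l.isLt; omega⟩ : Fin (2 * k)) ++
      List.replicate (n ⟨2 * l.1 + 1, by have := l.isLt; omega⟩)
          (⟨2 * l.1 + 1, by have := l.isLt; omega⟩ : Fin (2 * k))) := by
  induction N using Nat.strong_induction_on with
  | _ N ih =>
  intro n hN hmono
  by_cases h0 : ∀ i, n i = 0
  · have : (fun l : Fin k =>
      List.replicate (n ⟨2 * l.1, by have := l.isLt; omega⟩)
          (⟨2 * l.1, by have := l.isLt; omega⟩ : Fin (2 * k)) ++
      List.replicate (n ⟨2 * l.1 + 1, by have := l.isLt; omega⟩)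
          (⟨2 * l.1 + 1, by have := l.isLt; omega⟩ : Fin (2 * k)))
        = fun _ => ([] : List (Fin (2 * k))) := by
      funext l; simp [h0]
    rw [this]; exact GenA.empty
  · push_neg at h0
    obtain ⟨i0, hi0⟩ := h0
    have hne : (Finset.univ : Finset (Fin (2 * k))).Nonempty := ⟨i0, Finset.mem_univ _⟩
    obtain ⟨imax, _, himax⟩ := Finset.exists_max_image Finset.univ n hne
    have hSne : (Finset.univ.filter (fun i => ∀ i', n i' ≤ n i)).Nonempty := by
      refine ⟨imax, ?_⟩
      simp only [Finset.mem_filter, Finset.mem_univ, true_and]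
      exact fun i' => himax i' (Finset.mem_univ _)
    obtain ⟨j, hjS, hjbot⟩ := myExistsBot r hrefl htrans htotal _ hSne
    have hjmax : ∀ i', n i' ≤ n j := by
      simpa using (Finset.mem_filter.1 hjS).2
    have hjpos : 1 ≤ n j := le_trans (Nat.one_le_iff_ne_zero.2 hi0) (hjmax i0)
    set n' : Fin (2 * k) → ℕ := fun i => if r j i then n i - 1 else n i with hn'
    have hposle : ∀ i, r j i → 1 ≤ n i := fun i h => le_trans hjpos (hmono j i h)
    have hle : ∀ i, n' i ≤ n i := by
      intro i; simp only [hn']; split <;> omega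
    have hmono' : ∀ i i', r i i' → n' i ≤ n' i' := by
      intro i i' hii'
      have base := hmono i i' hii'
      by_cases h1 : r j i <;> by_cases h2 : r j i'
      · simp only [hn', if_pos h1, if_pos h2]; omega
      · simp only [hn', if_pos h1, if_neg h2]; omega
      · simp only [hn', if_neg h1, if_pos h2]
        have hij : r i j := (htotal i j).resolve_right h1
        have h3 : n i ≤ n j := hmono i j hij
        have h4 : n j ≤ n i' := hmono j i' h2
        have h5 : n i ≠ n j := by
          intro he
          apply h1
          apply hjbot
          simp only [Finset.mem_filter, Finset.mem_univ, true_and]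
          intro i''; rw [he]; exact hjmax i''
        omega
      · simp only [hn', if_neg h1, if_neg h2]; exact base
    have hlt : (∑ i, n' i) < N := by
      rw [← hN]
      apply Finset.sum_lt_sum (fun i _ => hle i) ⟨j, Finset.mem_univ _, ?_⟩
      simp only [hn', if_pos (hrefl j)]
      omega
    have H := ih _ hlt n' rfl hmono'
    have H2 := GenA.step j _ H
    convert H2 using 1
    funext l
    have he2 : (2 * l.1) < 2 * k := by have := l.isLt; omega
    have ho2 : (2 * l.1 + 1) < 2 * k := by have := l.isLt; omega
    set e : Fin (2 * k) := ⟨2 * l.1, he2⟩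
    set o : Fin (2 * k) := ⟨2 * l.1 + 1, ho2⟩
    show List.replicate (n e) e ++ List.replicate (n o) o =
      (if r j e then [e] else []) ++ (List.replicate (n' e) e ++ List.replicate (n' o) o)
        ++ (if r j o then [o] else [])
    by_cases h1 : r j e <;> by_cases h2 : r j o
    · have he1 := hposle e h1
      have ho1 := hposle o h2
      simp only [hn', if_pos h1, if_pos h2]
      rw [← repl_left e he1, ← repl_right o ho1]
      simp [List.append_assoc]
    · have he1 := hposle e h1
      simp only [hn', if_pos h1, if_neg h2]
      rw [← repl_left e he1]
      simp [List.append_assoc]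
    · have ho1 := hposle o h2
      simp only [hn', if_neg h1, if_pos h2]
      rw [← repl_right o ho1]
      simp [List.append_assoc]
    · simp only [hn', if_neg h1, if_neg h2]
      simp

/-- Completeness: for every `r`-monotone tuple `n ∈ ℕ^{2k}`, the tuple
`(a₁^{n₁}a₂^{n₂}, …, a_{2k-1}^{n_{2k-1}}a_{2k}^{n_{2k}})` is derivable. -/
theorem stmt_8 (k : ℕ) (hk : 1 ≤ k) (r : Fin (2 * k) → Fin (2 * k) → Prop)
    [DecidableRel r]
    (hrefl : Reflexive r) (htrans : Transitive r) (htotal : ∀ a b, r a b ∨ r b a)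
    (n : Fin (2 * k) → ℕ) (hmono : ∀ i j, r i j → n i ≤ n j) :
    GenA k r (fun l =>
      List.replicate (n ⟨2 * l.1, by have := l.isLt; omega⟩)
          (⟨2 * l.1, by have := l.isLt; omega⟩ : Fin (2 * k)) ++
      List.replicate (n ⟨2 * l.1 + 1, by have := l.isLt; omega⟩)
          (⟨2 * l.1 + 1, by have := l.isLt; omega⟩ : Fin (2 * k))) :=
  mainAux k hk r hrefl htrans htotal (∑ i, n i) n rfl hmono
end

section
/- Let ⪯ be a total preorder on [2k] and let L ⊆ ℕ^{2k} be defined by L = {n : ∀ i j, i ⪯ j → n_i ≤ n_j}. Then L is the submonoid of (ℕ^{2k}, +) generated by the 2k vectors e^{(j)}, j ∈ [2k], where e^{(j)}_i = 1 if j ⪯ i and e^{(j)}_i = 0 otherwise. -/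
/-!
A monotone tuple `n` is the sum, over `m < max n`, of the indicators of its level sets
`{i | m < n i}`. Each level set is an up-set of the total preorder, so it is empty or the up-set of
any of its minimal elements, and each summand is `0` or a generator. Conversely the generators are
monotone, and the monotone tuples form a submonoid.
-/

open Finset

variable {ι : Type*} {r : ι → ι → Prop}

theorem Finset.Nonempty.exists_forall_rel_of_total (htrans : Transitive r)
    (htotal : ∀ a b, r a b ∨ r b a) {s : Finset ι} (hs : s.Nonempty) :
    ∃ j ∈ s, ∀ i ∈ s, r j i := by
  have hrefl (a : ι) : r a a := (htotal a a).elim id id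
  induction hs using Finset.Nonempty.cons_induction with
  | singleton a => exact ⟨a, mem_singleton_self a, fun i hi => mem_singleton.1 hi ▸ hrefl a⟩
  | cons a s _ _ ih =>
    obtain ⟨j, hjs, hj⟩ := ih
    rcases htotal a j with haj | hja
    · refine ⟨a, mem_cons_self a s, fun i hi => ?_⟩
      rcases mem_cons.1 hi with rfl | his
      exacts [hrefl i, htrans haj (hj i his)]
    · refine ⟨j, mem_cons.2 (Or.inr hjs), fun i hi => ?_⟩
      rcases mem_cons.1 hi with rfl | his
      exacts [hja, hj i his]

variable (r) in
def relMonotoneAddSubmonoid (M : Type*) [AddCommMonoid M] [PartialOrder M] [IsOrderedAddMonoid M] :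
    AddSubmonoid (ι → M) where
  carrier := {n | ∀ i j, r i j → n i ≤ n j}
  zero_mem' _ _ _ := le_rfl
  add_mem' hm hn i j hij := add_le_add (hm i j hij) (hn i j hij)

variable (r) in
def upSetIndicators [DecidableRel r] : Set (ι → ℕ) :=
  {e | ∃ j, e = fun i => if r j i then 1 else 0}

variable [DecidableRel r]

theorem upSetIndicators_subset_relMonotone (htrans : Transitive r) :
    upSetIndicators r ⊆ relMonotoneAddSubmonoid r ℕ := by
  rintro _ ⟨j, rfl⟩ i i' hii'
  by_cases hji : r j i
  · simp [hji, htrans hji hii']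
  · simp [hji]

/-- A nonempty up-set of a total preorder on a finite type is the up-set of any of its minimal
elements. -/
theorem indicator_mem_closure_upSetIndicators [Fintype ι] (htrans : Transitive r)
    (htotal : ∀ a b, r a b ∨ r b a) {p : ι → Prop} [DecidablePred p]
    (hp : ∀ i j, r i j → p i → p j) :
    (fun i => if p i then 1 else 0) ∈ AddSubmonoid.closure (upSetIndicators r) := by
  by_cases hne : (univ.filter p).Nonempty
  · obtain ⟨j, hj, hmin⟩ := hne.exists_forall_rel_of_total htrans htotal
    have hpj : p j := (mem_filter.1 hj).2
    refine AddSubmonoid.subset_closure ⟨j, funext fun i => ?_⟩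
    have : p i ↔ r j i := ⟨fun hpi => hmin i (by simpa using hpi), fun hji => hp j i hji hpj⟩
    simp only [this]
  · have hzero : (fun i => if p i then 1 else 0 : ι → ℕ) = 0 :=
      funext fun i => if_neg fun hpi => hne ⟨i, by simpa using hpi⟩
    exact hzero ▸ zero_mem _

theorem sum_range_threshold_indicators {n : ι → ℕ} {N : ℕ} (hN : ∀ i, n i ≤ N) :
    ∑ m ∈ range N, (fun i => if m < n i then 1 else 0) = n := by
  funext i
  rw [Finset.sum_apply, Finset.sum_boole]
  have : (range N).filter (· < n i) = range (n i) := by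
    ext m
    simp only [mem_filter, mem_range]
    have := hN i
    omega
  simp [this]

theorem stmt_9_general (k : ℕ) (r : Fin (2 * k) → Fin (2 * k) → Prop) [DecidableRel r]
    (htrans : Transitive r) (htotal : ∀ a b, r a b ∨ r b a) :
    {n : Fin (2 * k) → ℕ | ∀ i j, r i j → n i ≤ n j} =
      (AddSubmonoid.closure
        {e : Fin (2 * k) → ℕ | ∃ j, e = fun i => if r j i then 1 else 0} :
        Set (Fin (2 * k) → ℕ)) := by
  ext n
  constructor
  · intro hn
    rw [SetLike.mem_coe,
      ← sum_range_threshold_indicators (n := n) (N := univ.sup n) fun i => le_sup (mem_univ i)]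
    exact sum_mem fun m _ => indicator_mem_closure_upSetIndicators htrans htotal
      fun i j hij (hmi : m < n i) => hmi.trans_le (hn i j hij)
  · exact fun hn => AddSubmonoid.closure_le.2 (upSetIndicators_subset_relMonotone htrans) hn

/-- For a total preorder `r` on `Fin (2k)`, the set of `r`-monotone tuples in `ℕ^{2k}`
is exactly the additive submonoid generated by the indicator vectors `e^{(j)}` of the
up-sets of single elements: `e^{(j)}_i = 1` if `j ⪯ i`, else `0`. -/
theorem stmt_9 (k : ℕ) (r : Fin (2 * k) → Fin (2 * k) → Prop) [DecidableRel r]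
    (hrefl : Reflexive r) (htrans : Transitive r) (htotal : ∀ a b, r a b ∨ r b a) :
    {n : Fin (2 * k) → ℕ | ∀ i j, r i j → n i ≤ n j} =
      (AddSubmonoid.closure
        {e : Fin (2 * k) → ℕ | ∃ j, e = fun i => if r j i then 1 else 0} :
        Set (Fin (2 * k) → ℕ)) :=
  stmt_9_general k r htrans htotal
end
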